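/- For every integer n ≥ 2, in every exact Gallai-(n−1)-coloring of the complete graph K_n there are at least ⌈n/2⌉ colors each of which induces a star. -/
import Mathlib


open Finset

/-- A Gallai coloring: a symmetric edge-coloring of the complete graph on `V`
with no rainbow triangle. -/
def IsGallai {V β : Type*} (c : V → V → β) : Prop :=
  (∀ a b, c a b = c b a) ∧
  ∀ a b d : V, a ≠ b → a ≠ d → b ≠ d →
    ¬(c a b ≠ c a d ∧ c a b ≠ c b d ∧ c a d ≠ c b d)

/-- The set of colors appearing on edges inside the vertex set `S`. -/
def colorsOn {V β : Type*} [DecidableEq V] [DecidableEq β]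
    (c : V → V → β) (S : Finset V) : Finset β :=
  ((S ×ˢ S).filter fun p => p.1 ≠ p.2).image fun p => c p.1 p.2

/-- `gallaiNum k q p` is the smallest positive `n` such that every Gallai-`k`-coloring
of `K_n` contains a set of `p` vertices whose induced edges use at most `q` colors. -/
noncomputable def gallaiNum (k q p : ℕ) : ℕ :=
  sInf {n : ℕ | 0 < n ∧ ∀ c : Fin n → Fin n → Fin k, IsGallai c →
    ∃ S : Finset (Fin n), S.card = p ∧ (colorsOn c S).card ≤ q}

/-- Color `i` induces a star: some edge has color `i`, and all edges of color `i`
share a common vertex. -/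
def inducesStar {V β : Type*} (c : V → V → β) (i : β) : Prop :=
  (∃ a b, a ≠ b ∧ c a b = i) ∧ ∃ v, ∀ a b, a ≠ b → c a b = i → a = v ∨ b = v

lemma mem_colorsOn {V β : Type*} [DecidableEq V] [DecidableEq β]
    {c : V → V → β} {S : Finset V} {i : β} :
    i ∈ colorsOn c S ↔ ∃ a ∈ S, ∃ b ∈ S, a ≠ b ∧ c a b = i := by
  simp only [colorsOn, mem_image, mem_filter, mem_product, Prod.exists]
  constructor
  · rintro ⟨a, b, ⟨⟨ha, hb⟩, hab⟩, h⟩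
    exact ⟨a, ha, b, hb, hab, h⟩
  · rintro ⟨a, ha, b, hb, hab, h⟩
    exact ⟨a, b, ⟨⟨ha, hb⟩, hab⟩, h⟩

lemma colorsOn_mono {V β : Type*} [DecidableEq V] [DecidableEq β]
    (c : V → V → β) {S T : Finset V} (h : S ⊆ T) :
    colorsOn c S ⊆ colorsOn c T := by
  intro i hi
  rw [mem_colorsOn] at hi ⊢
  obtain ⟨a, ha, b, hb, hab, hc⟩ := hi
  exact ⟨a, h ha, b, h hb, hab, hc⟩

/-- removing a vertex kills at most one color -/
lemma sdiff_colorsOn_card_le_one {V β : Type*} [DecidableEq V] [DecidableEq β]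
    {c : V → V → β} (hg : IsGallai c) (S : Finset V) (v : V) :
    (colorsOn c S \ colorsOn c (S.erase v)).card ≤ 1 := by
  -- first: any color in the difference has the form c v a with a ∈ S.erase v
  have key : ∀ i ∈ colorsOn c S \ colorsOn c (S.erase v),
      ∃ a ∈ S.erase v, c v a = i := by
    intro i hi
    rw [mem_sdiff, mem_colorsOn] at hi
    obtain ⟨⟨a, ha, b, hb, hab, hc⟩, hni⟩ := hi
    rcases eq_or_ne a v with rfl | hav
    · exact ⟨b, mem_erase.2 ⟨fun h => hab h.symm, hb⟩, hc⟩
    rcases eq_or_ne b v with rfl | hbv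
    · exact ⟨a, mem_erase.2 ⟨hav, ha⟩, by rw [hg.1]; exact hc⟩
    · exact absurd (mem_colorsOn.2 ⟨a, mem_erase.2 ⟨hav, ha⟩, b, mem_erase.2 ⟨hbv, hb⟩, hab, hc⟩) hni
  rw [card_le_one]
  intro i hi j hj
  by_contra hij
  obtain ⟨a, ha, hca⟩ := key i hi
  obtain ⟨b, hb, hcb⟩ := key j hj
  have hva : v ≠ a := fun h => (mem_erase.1 ha).1 h.symm
  have hvb : v ≠ b := fun h => (mem_erase.1 hb).1 h.symm
  have hab : a ≠ b := by rintro rfl; rw [hca] at hcb; exact hij hcb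
  have hcab : c a b ∈ colorsOn c (S.erase v) :=
    mem_colorsOn.2 ⟨a, ha, b, hb, hab, rfl⟩
  have hine : c a b ≠ i := fun h => (mem_sdiff.1 hi).2 (h ▸ hcab)
  have hjne : c a b ≠ j := fun h => (mem_sdiff.1 hj).2 (h ▸ hcab)
  exact hg.2 v a b hva hvb hab
    ⟨by rw [hca, hcb]; exact hij, by rw [hca]; exact hine.symm, by rw [hcb]; exact hjne.symm⟩

/-- a Gallai coloring on `S` uses at most `|S| - 1` colors -/
lemma colorsOn_card_le {V β : Type*} [DecidableEq V] [DecidableEq β]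
    {c : V → V → β} (hg : IsGallai c) (S : Finset V) :
    (colorsOn c S).card ≤ S.card - 1 := by
  induction S using Finset.strongInduction with
  | _ S ih =>
    rcases le_or_gt S.card 1 with hle | hlt
    · have he : colorsOn c S = ∅ := by
        rw [eq_empty_iff_forall_notMem]
        intro i hi
        obtain ⟨a, ha, b, hb, hab, -⟩ := mem_colorsOn.1 hi
        exact hab (Finset.card_le_one.1 hle a ha b hb)
      simp [he]
    obtain ⟨v, hv⟩ : S.Nonempty := card_pos.1 (by omega)
    have h1 : colorsOn c S ⊆ colorsOn c (S.erase v) ∪ (colorsOn c S \ colorsOn c (S.erase v)) := by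
      intro i hi
      rcases em (i ∈ colorsOn c (S.erase v)) with h | h
      · exact mem_union_left _ h
      · exact mem_union_right _ (mem_sdiff.2 ⟨hi, h⟩)
    have h2 := ih (S.erase v) (erase_ssubset hv)
    have h3 := sdiff_colorsOn_card_le_one hg S v
    have h4 : (colorsOn c S).card ≤ (colorsOn c (S.erase v)).card +
        (colorsOn c S \ colorsOn c (S.erase v)).card :=
      (card_le_card h1).trans (card_union_le _ _)
    have h5 : (S.erase v).card = S.card - 1 := card_erase_of_mem hv
    omega

theorem star_colors_of_exact_gallai (n : ℕ) (hn : 2 ≤ n)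
    (c : Fin n → Fin n → Fin (n - 1)) (hg : IsGallai c)
    (hexact : ∀ i : Fin (n - 1), ∃ a b : Fin n, a ≠ b ∧ c a b = i) :
    (n + 1) / 2 ≤ {i : Fin (n - 1) | inducesStar c i}.ncard := by
  -- for each vertex v there is a color missing from K_n - v
  have hmiss : ∀ v : Fin n, ∃ i : Fin (n - 1), i ∉ colorsOn c ((univ : Finset (Fin n)).erase v) := by
    intro v
    by_contra h
    push_neg at h
    have hsub : (univ : Finset (Fin (n-1))) ⊆ colorsOn c ((univ : Finset (Fin n)).erase v) :=
      fun i _ => h i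
    have h1 := card_le_card hsub
    have h2 := colorsOn_card_le hg ((univ : Finset (Fin n)).erase v)
    rw [card_erase_of_mem (mem_univ v)] at h2
    simp only [card_univ, Fintype.card_fin] at h1 h2
    omega
  choose f hf using hmiss
  -- each f v induces a star centered at v
  have hstar : ∀ v : Fin n, ∀ a b : Fin n, a ≠ b → c a b = f v → a = v ∨ b = v := by
    intro v a b hab hc
    by_contra h
    push_neg at h
    exact hf v (mem_colorsOn.2 ⟨a, mem_erase.2 ⟨h.1, mem_univ a⟩,
      b, mem_erase.2 ⟨h.2, mem_univ b⟩, hab, hc⟩)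
  have hind : ∀ v : Fin n, inducesStar c (f v) :=
    fun v => ⟨hexact (f v), v, hstar v⟩
  -- fibers of f have size at most 2
  set T := (univ : Finset (Fin n)).image f with hT
  have hcard : n ≤ 2 * T.card := by
    have := Finset.card_le_mul_card_image (f := f) (univ : Finset (Fin n)) 2 ?_
    · simpa using this
    · intro i hi
      obtain ⟨a, b, hab, hc⟩ := hexact i
      have hsub : (univ : Finset (Fin n)).filter (fun v => f v = i) ⊆ {a, b} := by
        intro v hv
        have hfv : f v = i := (mem_filter.1 hv).2
        have := hstar v a b hab (by rw [hc, hfv])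
        simp only [mem_insert, mem_singleton]
        tauto
      calc ((univ : Finset (Fin n)).filter (fun v => f v = i)).card
          ≤ ({a, b} : Finset (Fin n)).card := card_le_card hsub
        _ ≤ 2 := card_insert_le _ _ |>.trans (by simp)
  -- conclude
  have hsub : (↑T : Set (Fin (n-1))) ⊆ {i : Fin (n - 1) | inducesStar c i} := by
    intro i hi
    simp only [hT, coe_image, Set.mem_image, coe_univ, Set.image_univ, Set.mem_range] at hi
    obtain ⟨v, rfl⟩ := hi
    exact hind v
  have h1 : T.card ≤ {i : Fin (n - 1) | inducesStar c i}.ncard := by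
    rw [← Set.ncard_coe_finset]
    exact Set.ncard_le_ncard hsub (Set.toFinite _)
  omega
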